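/- For every family of Boolean sequences s : ℕ → ℕ → Bool and every natural number k, if ω ^ 2 ≤ Ψ(s) then ω ^ 2 ≤ Ψ(fun i => s (i + k)). -/

import Mathlib

/-- A Boolean sequence `b` semidecides a proposition `Q` if `Q ↔ ∃ j, b j = true`. -/
def Semidecides (b : ℕ → Bool) (Q : Prop) : Prop :=
  Q ↔ ∃ j, b j = true

open Classical in
/-- `tCount s n k` is the number of indices `i < n` such that `s i j = true` for some `j ≤ k`. -/
noncomputable def tCount (s : ℕ → ℕ → Bool) (n k : ℕ) : ℕ :=
  ((Finset.range n).filter (fun i => ∃ j ≤ k, s i j = true)).card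

/-- The `n`-th characteristic approximant `Ψₙ(s)`. -/
noncomputable def psiApprox (s : ℕ → ℕ → Bool) (n : ℕ) : Ordinal :=
  ⨆ k : ℕ, (Ordinal.omega0 * (tCount s n k) + k)

/-- The characteristic ordinal `Ψ(s)`. -/
noncomputable def psi (s : ℕ → ℕ → Bool) : Ordinal :=
  ⨆ n : ℕ, (psiApprox s n + n)

/-!
`ω ^ 2 ≤ Ψ(s)` says exactly that the counts `t s n k` are unbounded: the approximant `Ψₙ(s)`
lies below `ω * (m + 1)` as soon as all counts `t s n k` are below `m`. Shifting the sequences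
by `k` lowers each count by at most `k`, so it keeps them unbounded.
-/

universe u

open Ordinal

theorem Finset.card_filter_range_le_card_filter_range_add (p : ℕ → Prop) [DecidablePred p]
    (n k : ℕ) :
    ((Finset.range n).filter p).card ≤ ((Finset.range n).filter (fun i => p (i + k))).card + k := by
  set B := (Finset.range n).filter (fun i => p (i + k))
  have hsub : (Finset.range n).filter p ⊆ Finset.range k ∪ B.map (addRightEmbedding k) := by
    intro i hi
    rw [Finset.mem_filter, Finset.mem_range] at hi
    rw [Finset.mem_union, Finset.mem_range, Finset.mem_map]
    by_cases hik : i < k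
    · exact Or.inl hik
    · refine Or.inr ⟨i - k, ?_, by simp only [addRightEmbedding_apply]; omega⟩
      rw [Finset.mem_filter, Finset.mem_range, Nat.sub_add_cancel (by omega)]
      exact ⟨by omega, hi.2⟩
  calc ((Finset.range n).filter p).card
      ≤ (Finset.range k ∪ B.map (addRightEmbedding k)).card := Finset.card_le_card hsub
    _ ≤ B.card + k := by
      rw [add_comm]
      simpa using Finset.card_union_le (Finset.range k) (B.map (addRightEmbedding k))

theorem tCount_le_tCount_shift_add (s : ℕ → ℕ → Bool) (n j k : ℕ) :
    tCount s n j ≤ tCount (fun i => s (i + k)) n j + k := by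
  classical
  unfold tCount
  convert Finset.card_filter_range_le_card_filter_range_add _ n k

theorem omega0_mul_tCount_le_psi (s : ℕ → ℕ → Bool) (n k : ℕ) :
    ω * tCount s n k ≤ psi.{u} s :=
  calc ω * tCount s n k ≤ psiApprox.{u} s n :=
        le_self_add.trans (le_ciSup bddAbove_of_small k)
    _ ≤ psiApprox s n + n := le_self_add
    _ ≤ psi s := le_ciSup bddAbove_of_small n

theorem psiApprox_add_lt_of_forall_tCount_lt {s : ℕ → ℕ → Bool} {n m : ℕ}
    (h : ∀ k, tCount s n k < m) : psiApprox.{u} s n + n < ω * (m + 1) := by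
  have happrox : psiApprox.{u} s n ≤ ω * m := by
    refine Ordinal.iSup_le fun k => ?_
    calc ω * tCount s n k + k ≤ ω * tCount s n k + ω := by
          gcongr; exact (natCast_lt_omega0 k).le
      _ = ω * (tCount s n k + 1 : ℕ) := by push_cast; rw [mul_add_one]
      _ ≤ ω * m := by gcongr; exact_mod_cast h k
  calc psiApprox s n + n < ω * m + ω :=
        (add_le_add_left happrox _).trans_lt ((add_lt_add_iff_left _).2 (natCast_lt_omega0 n))
    _ = ω * (m + 1) := (mul_add_one _ _).symm

theorem omega0_sq_le_psi_iff (s : ℕ → ℕ → Bool) :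
    ω ^ 2 ≤ psi.{u} s ↔ ∀ m : ℕ, ∃ n k, m ≤ tCount s n k := by
  rw [sq]
  constructor
  · intro h m
    have hlt : ω * (m + 1 : ℕ) < psi s :=
      ((mul_lt_mul_iff_right₀ omega0_pos).2 (natCast_lt_omega0 _)).trans_le h
    obtain ⟨n, hn⟩ := Ordinal.lt_iSup_iff.1 hlt
    by_contra! hsmall
    exact (psiApprox_add_lt_of_forall_tCount_lt (hsmall n)).not_gt (by exact_mod_cast hn)
  · rw [mul_le_iff_of_isSuccLimit isSuccLimit_omega0]
    intro h c hc
    obtain ⟨m, rfl⟩ := lt_omega0.1 hc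
    obtain ⟨n, k, hm⟩ := h m
    exact (mul_le_mul_right (Nat.cast_le.2 hm) _).trans (omega0_mul_tCount_le_psi s n k)

theorem psi_shift (s : ℕ → ℕ → Bool) (k : ℕ)
    (h : Ordinal.omega0 ^ 2 ≤ psi s) :
    Ordinal.omega0 ^ 2 ≤ psi (fun i => s (i + k)) := by
  rw [omega0_sq_le_psi_iff] at h ⊢
  intro m
  obtain ⟨n, j, hm⟩ := h (m + k)
  exact ⟨n, j, by have := tCount_le_tCount_shift_add s n j k; omega⟩
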